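/- arXiv:1504.02000 — 2 statements merged into one kernel-verified Lean document; each statement's English description precedes it below -/
import Mathlib

section
/- Let 0 < b < a and let f : ℝ → ℝ be continuous on [b,a]. Suppose there is a sequence (Z_m) of real numbers with 0 < Z_m < b for all m and Z_m → b, such that ∫_b^a f(t)·(t − b + Z_m)^{−1/2} dt = 0 for every m. Then f(t) = 0 for all t ∈ [b,a]. -/
/-!
The integral `A(z) = ∫_b^a f(t) (t - b + z)^(-1/2) dt` makes sense for complex `z` with
`0 < re z` and is holomorphic there, so vanishing along `Z_m → b` forces `A ≡ 0` on the
half-plane. Differentiating `n` times and evaluating at `z = b` gives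
`∫_b^a f(t) t^(-1/2) (t⁻¹)^n dt = 0` for every `n`. Since `t ↦ t⁻¹` separates the points of
`[b, a]`, Stone–Weierstrass makes polynomials in `t⁻¹` dense in `C([b, a])`, so `f(t) t^(-1/2)`
is orthogonal to itself and hence zero.
-/

open MeasureTheory intervalIntegral Set Filter Topology Metric Complex

section Moments

variable {a b : ℝ} {g φ : ℝ → ℝ}

theorem eqOn_zero_of_forall_near_integral_mul_eq_zero (hab : a < b)
    (hg : ContinuousOn g (Icc a b))
    (happrox : ∀ ε > 0, ∃ q : ℝ → ℝ, ContinuousOn q (Icc a b) ∧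
      (∀ x ∈ Icc a b, |q x - g x| < ε) ∧ ∫ x in a..b, g x * q x = 0) :
    EqOn g 0 (Icc a b) := by
  obtain ⟨M, hM⟩ := isCompact_Icc.exists_bound_of_continuousOn hg
  have hsq_cont : ContinuousOn (fun x => g x * g x) (Icc a b) := hg.mul hg
  have hsq_le : ∀ ε > 0, ∫ x in a..b, g x * g x ≤ ε * (M * (b - a)) := by
    intro ε hε
    obtain ⟨q, hq, hq_near, hq_orth⟩ := happrox ε hε
    have hdiff : ∫ x in a..b, g x * g x = ∫ x in a..b, g x * (g x - q x) := by
      have hgq : IntervalIntegrable (fun x => g x * q x) volume a b :=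
        (hg.mul hq).intervalIntegrable_of_Icc hab.le
      simp_rw [mul_sub]
      rw [integral_sub (hsq_cont.intervalIntegrable_of_Icc hab.le) hgq, hq_orth, sub_zero]
    have hbound : ∀ x ∈ uIoc a b, ‖g x * (g x - q x)‖ ≤ M * ε := by
      intro x hx
      have hx : x ∈ Icc a b := Ioc_subset_Icc_self (uIoc_of_le hab.le ▸ hx)
      rw [norm_mul, Real.norm_eq_abs (g x - q x), abs_sub_comm]
      exact mul_le_mul (hM x hx) (hq_near x hx).le (abs_nonneg _) ((norm_nonneg _).trans (hM x hx))
    calc ∫ x in a..b, g x * g x ≤ ‖∫ x in a..b, g x * (g x - q x)‖ := hdiff ▸ Real.le_norm_self _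
      _ ≤ M * ε * |b - a| := norm_integral_le_of_norm_le_const hbound
      _ = ε * (M * (b - a)) := by rw [abs_of_pos (sub_pos.2 hab)]; ring
  have hsq_nonpos : ∫ x in a..b, g x * g x ≤ 0 := by
    have hlim : Tendsto (fun ε : ℝ => ε * (M * (b - a))) (𝓝[>] 0) (𝓝 0) := by
      simpa using tendsto_nhdsWithin_of_tendsto_nhds
        (Continuous.tendsto (f := fun ε : ℝ => ε * (M * (b - a))) (by fun_prop) 0)
    exact ge_of_tendsto hlim (eventually_nhdsWithin_of_forall hsq_le)
  intro x hx
  by_contra hgx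
  have hpos := integral_pos hab hsq_cont (fun y _ => mul_self_nonneg (g y))
    ⟨x, hx, mul_self_pos.2 hgx⟩
  linarith

theorem exists_polynomial_near_comp (hφ : ContinuousOn φ (Icc a b)) (hφ_inj : InjOn φ (Icc a b))
    (hg : ContinuousOn g (Icc a b)) {ε : ℝ} (hε : 0 < ε) :
    ∃ p : Polynomial ℝ, ∀ x ∈ Icc a b, |p.eval (φ x) - g x| < ε := by
  let φ' : C(Icc a b, ℝ) := ⟨(Icc a b).domRestrict φ, hφ.domRestrict⟩
  have hsep : (Algebra.adjoin ℝ {φ'}).SeparatesPoints := by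
    intro x y hxy
    refine ⟨φ', ⟨φ', Algebra.subset_adjoin rfl, rfl⟩, fun h => hxy (Subtype.ext ?_)⟩
    exact hφ_inj x.2 y.2 h
  obtain ⟨⟨q, hqA⟩, hq⟩ := ContinuousMap.exists_mem_subalgebra_near_continuous_of_separatesPoints
    _ hsep _ hg.domRestrict ε hε
  rw [Algebra.adjoin_singleton_eq_range_aeval] at hqA
  obtain ⟨p, rfl⟩ := hqA
  exact ⟨p, fun x hx => by simpa [φ', Polynomial.aeval_continuousMap_apply] using hq ⟨x, hx⟩⟩

theorem integral_mul_eval_comp_eq_zero (hab : a ≤ b) (hg : ContinuousOn g (Icc a b))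
    (hφ : ContinuousOn φ (Icc a b)) (h : ∀ n : ℕ, ∫ x in a..b, g x * φ x ^ n = 0)
    (p : Polynomial ℝ) : ∫ x in a..b, g x * p.eval (φ x) = 0 := by
  induction p using Polynomial.induction_on' with
  | add p q hp hq =>
    have hint : ∀ r : Polynomial ℝ, IntervalIntegrable (fun x => g x * r.eval (φ x)) volume a b :=
      fun r => (hg.mul (r.continuous.comp_continuousOn hφ)).intervalIntegrable_of_Icc hab
    simp_rw [Polynomial.eval_add, mul_add]
    rw [integral_add (hint p) (hint q), hp, hq, add_zero]
  | monomial n r =>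
    simp_rw [Polynomial.eval_monomial, mul_left_comm (g _)]
    rw [intervalIntegral.integral_const_mul, h n, mul_zero]

theorem eqOn_zero_of_forall_integral_mul_pow_eq_zero (hab : a < b)
    (hg : ContinuousOn g (Icc a b)) (hφ : ContinuousOn φ (Icc a b)) (hφ_inj : InjOn φ (Icc a b))
    (h : ∀ n : ℕ, ∫ x in a..b, g x * φ x ^ n = 0) :
    EqOn g 0 (Icc a b) := by
  refine eqOn_zero_of_forall_near_integral_mul_eq_zero hab hg fun ε hε => ?_
  obtain ⟨p, hp⟩ := exists_polynomial_near_comp hφ hφ_inj hg hε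
  exact ⟨fun x => p.eval (φ x), p.continuous.comp_continuousOn hφ, hp,
    integral_mul_eval_comp_eq_zero hab.le hg hφ h p⟩

end Moments

noncomputable def abelIntegral (g : ℝ → ℂ) (b a : ℝ) (c z : ℂ) : ℂ :=
  ∫ t in b..a, g t * ((t : ℂ) - b + z) ^ c

section AbelIntegral

variable {g : ℝ → ℂ} {a b : ℝ}

theorem sub_add_mem_slitPlane {t : ℝ} {z : ℂ} (ht : b ≤ t) (hz : 0 < z.re) :
    (t : ℂ) - b + z ∈ slitPlane :=
  mem_slitPlane_iff.2 <| Or.inl <| by simp only [add_re, sub_re, ofReal_re]; linarith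

theorem continuousOn_mul_cpow (hg : ContinuousOn g (Icc b a)) (c : ℂ) {z : ℂ} (hz : 0 < z.re) :
    ContinuousOn (fun t : ℝ => g t * ((t : ℂ) - b + z) ^ c) (Icc b a) :=
  hg.mul <| ContinuousOn.cpow_const (by fun_prop) fun t ht => sub_add_mem_slitPlane ht.1 hz

theorem hasDerivAt_abelIntegral (hba : b ≤ a) (hg : ContinuousOn g (Icc b a)) (c : ℂ) {z : ℂ}
    (hz : 0 < z.re) : HasDerivAt (abelIntegral g b a c) (c * abelIntegral g b a (c - 1) z) z := by
  have hball : ∀ w ∈ closedBall z (z.re / 2), 0 < w.re := by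
    intro w hw
    have := (abs_re_le_norm (w - z)).trans (mem_closedBall_iff_norm.1 hw)
    rw [sub_re, abs_le] at this
    linarith
  have hnhds : closedBall z (z.re / 2) ∈ 𝓝 z := closedBall_mem_nhds z (by positivity)
  have hIoc : uIoc b a ⊆ Icc b a := uIoc_of_le hba ▸ Ioc_subset_Icc_self
  obtain ⟨B, hB⟩ := (isCompact_Icc.prod (isCompact_closedBall z _)).exists_bound_of_continuousOn
    (f := fun p : ℝ × ℂ => c * (g p.1 * ((p.1 : ℂ) - b + p.2) ^ (c - 1))) <|
    continuousOn_const.mul <| (hg.comp continuousOn_fst fun p hp => hp.1).mul <|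
      ContinuousOn.cpow_const (by fun_prop) fun p hp => sub_add_mem_slitPlane hp.1.1 (hball _ hp.2)
  have hderiv := hasDerivAt_integral_of_dominated_loc_of_deriv_le (μ := volume) (a := b) (b := a)
    (F := fun w t => g t * ((t : ℂ) - b + w) ^ c)
    (F' := fun w t => c * (g t * ((t : ℂ) - b + w) ^ (c - 1)))
    (bound := fun _ => B) hnhds ?_ ?_ ?_ ?_ ?_ ?_
  · rw [abelIntegral, ← intervalIntegral.integral_const_mul]
    exact hderiv.2
  · exact eventually_of_mem hnhds fun w hw =>
      ((continuousOn_mul_cpow hg c (hball w hw)).mono hIoc).aestronglyMeasurable measurableSet_uIoc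
  · exact (continuousOn_mul_cpow hg c hz).intervalIntegrable_of_Icc hba
  · exact ((continuousOn_const.mul (continuousOn_mul_cpow hg (c - 1) hz)).mono hIoc
      ).aestronglyMeasurable measurableSet_uIoc
  · exact Eventually.of_forall fun t ht w hw => hB (t, w) ⟨hIoc ht, hw⟩
  · exact intervalIntegrable_const
  · refine Eventually.of_forall fun t ht w hw => ?_
    have hlin : HasDerivAt (fun w : ℂ => (t : ℂ) - b + w) 1 w := (hasDerivAt_id w).const_add _
    simpa [mul_left_comm] using
      (hlin.cpow_const (sub_add_mem_slitPlane (hIoc ht).1 (hball w hw))).const_mul (g t)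

theorem differentiableOn_abelIntegral (hba : b ≤ a) (hg : ContinuousOn g (Icc b a)) (c : ℂ) :
    DifferentiableOn ℂ (abelIntegral g b a c) {z | 0 < z.re} := fun _ hz =>
  (hasDerivAt_abelIntegral hba hg c hz).differentiableAt.differentiableWithinAt

theorem isOpen_re_pos : IsOpen {z : ℂ | 0 < z.re} := isOpen_lt continuous_const continuous_re

theorem abelIntegral_eqOn_zero_of_tendsto (hba : b ≤ a) (hg : ContinuousOn g (Icc b a)) (c : ℂ)
    {z₀ : ℂ} (hz₀ : 0 < z₀.re) {Z : ℕ → ℂ} (hZ : Tendsto Z atTop (𝓝[≠] z₀))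
    (hvan : ∀ m, abelIntegral g b a c (Z m) = 0) :
    EqOn (abelIntegral g b a c) 0 {z | 0 < z.re} :=
  ((differentiableOn_abelIntegral hba hg c).analyticOnNhd isOpen_re_pos
    ).eqOn_zero_of_preconnected_of_frequently_eq_zero (convex_halfSpace_re_gt 0).isPreconnected hz₀
    (hZ.frequently (Frequently.of_forall hvan))

theorem abelIntegral_sub_one_eqOn_zero (hba : b ≤ a) (hg : ContinuousOn g (Icc b a)) {c : ℂ}
    (hc : c ≠ 0) (h : EqOn (abelIntegral g b a c) 0 {z | 0 < z.re}) :
    EqOn (abelIntegral g b a (c - 1)) 0 {z | 0 < z.re} := by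
  intro z hz
  have hlocal : abelIntegral g b a c =ᶠ[𝓝 z] fun _ => 0 :=
    eventually_of_mem (isOpen_re_pos.mem_nhds hz) h
  have hderiv := (hasDerivAt_abelIntegral hba hg c hz).unique
    ((hasDerivAt_const z 0).congr_of_eventuallyEq hlocal)
  exact (mul_eq_zero.1 hderiv).resolve_left hc

theorem abelIntegral_sub_natCast_eqOn_zero (hba : b ≤ a) (hg : ContinuousOn g (Icc b a)) {c : ℂ}
    (hc : ∀ n : ℕ, c ≠ n) (h : EqOn (abelIntegral g b a c) 0 {z | 0 < z.re}) (n : ℕ) :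
    EqOn (abelIntegral g b a (c - n)) 0 {z | 0 < z.re} := by
  induction n with
  | zero => simpa using h
  | succ n ih =>
    rw [Nat.cast_succ, ← sub_sub]
    exact abelIntegral_sub_one_eqOn_zero hba hg (sub_ne_zero.2 (hc n)) ih

theorem abelIntegral_ofReal (hba : b ≤ a) (f : ℝ → ℝ) (c : ℝ) {z : ℝ} (hz : 0 ≤ z) :
    abelIntegral (fun t => f t) b a c z = ↑(∫ t in b..a, f t * (t - b + z) ^ c) := by
  rw [abelIntegral, ← intervalIntegral.integral_ofReal]
  refine integral_congr fun t ht => ?_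
  have ht : b ≤ t := (uIcc_of_le hba ▸ ht).1
  rw [ofReal_mul, ofReal_cpow (by linarith)]
  simp

theorem integral_mul_rpow_mul_inv_pow_eq_zero (hb : 0 < b) (hba : b ≤ a) {f : ℝ → ℝ}
    (hf : ContinuousOn f (Icc b a)) {c : ℝ} (hc : ∀ n : ℕ, c ≠ n)
    (h : EqOn (abelIntegral (fun t => f t) b a c) 0 {z | 0 < z.re}) (n : ℕ) :
    ∫ t in b..a, f t * t ^ c * t⁻¹ ^ n = 0 := by
  have hF : ContinuousOn (fun t => (f t : ℂ)) (Icc b a) := continuous_ofReal.comp_continuousOn hf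
  have hn := abelIntegral_sub_natCast_eqOn_zero hba hF (fun n => by exact_mod_cast hc n) h n
    (show 0 < (b : ℂ).re by simpa using hb)
  rw [show (c : ℂ) - n = ((c - n : ℝ) : ℂ) by push_cast; ring,
    abelIntegral_ofReal hba f _ hb.le] at hn
  refine (integral_congr fun t ht => ?_).trans (ofReal_eq_zero.1 hn)
  have ht : 0 < t := hb.trans_le (uIcc_of_le hba ▸ ht).1
  simp only [sub_add_cancel, Real.rpow_sub ht, Real.rpow_natCast, div_eq_mul_inv, inv_pow,
    mul_assoc]

end AbelIntegral

/-- If `f` is continuous on `[b,a]` (with `0 < b < a`) and the Abel-type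
integrals `∫_b^a f(t) (t - b + Z_m)^{-1/2} dt` vanish along a sequence `Z_m ∈ (0,b)` with
`Z_m → b`, then `f ≡ 0` on `[b,a]`. -/
theorem stmt_0 (a b : ℝ) (hb : 0 < b) (hba : b < a)
    (f : ℝ → ℝ) (hf : ContinuousOn f (Set.Icc b a))
    (Z : ℕ → ℝ) (hZpos : ∀ m, 0 < Z m) (hZb : ∀ m, Z m < b)
    (hZlim : Filter.Tendsto Z Filter.atTop (nhds b))
    (hint : ∀ m, (∫ t in b..a, f t * (t - b + Z m) ^ (-(1/2) : ℝ)) = 0) :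
    ∀ t ∈ Set.Icc b a, f t = 0 := by
  have hF : ContinuousOn (fun t => (f t : ℂ)) (Icc b a) := continuous_ofReal.comp_continuousOn hf
  have hZ : Tendsto (fun m => (Z m : ℂ)) atTop (𝓝[≠] (b : ℂ)) :=
    tendsto_nhdsWithin_of_tendsto_nhds_of_eventually_within _
      ((continuous_ofReal.tendsto b).comp hZlim)
      (Eventually.of_forall fun m => by simpa using (hZb m).ne)
  have hvan : EqOn (abelIntegral (fun t => f t) b a ((-(1/2) : ℝ) : ℂ)) 0 {z | 0 < z.re} :=
    abelIntegral_eqOn_zero_of_tendsto hba.le hF _ (by simpa using hb) hZ fun m => by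
      rw [abelIntegral_ofReal hba.le f _ (hZpos m).le, hint m, ofReal_zero]
  have hnat : ∀ n : ℕ, (-(1/2) : ℝ) ≠ n := fun n =>
    ((by norm_num : (-(1/2) : ℝ) < 0).trans_le n.cast_nonneg).ne
  have hg : EqOn (fun t => f t * t ^ (-(1/2) : ℝ)) 0 (Icc b a) :=
    eqOn_zero_of_forall_integral_mul_pow_eq_zero hba
      (hf.mul (continuousOn_id.rpow_const fun t ht => Or.inl (hb.trans_le ht.1).ne'))
      (continuousOn_inv₀.mono fun t ht => (hb.trans_le ht.1).ne') inv_injective.injOn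
      (integral_mul_rpow_mul_inv_pow_eq_zero hb hba.le hf hnat hvan)
  intro t ht
  exact (mul_eq_zero.1 (hg ht)).resolve_right (Real.rpow_pos_of_pos (hb.trans_le ht.1) _).ne'
end

section
/- Let c < d be real numbers and let μ and ν be finite Borel measures on ℝ whose supports are contained in [c,d] (i.e. μ and ν give measure zero to the complement of [c,d]). If ∫_ℝ √(max(E − x, 0)) dμ(x) = ∫_ℝ √(max(E − x, 0)) dν(x) for every E ∈ ℝ, then μ = ν. -/
/-!
Multiply the Abel transform `F_μ(E) = ∫ √((E - x)₊) dμ(x)` by `e^{-sE}` and integrate in `E`: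
by Tonelli and translation invariance of Lebesgue measure this gives
`Γ(3/2) s^{-3/2} ∫ e^{-sx} dμ(x)`, so `μ` and `ν` have the same moment generating function on
`(-∞, 0)`. For compactly supported measures the moment generating function is real-analytic on
all of `ℝ`, so the two agree everywhere; then so do the complex moment generating functions,
and these determine a finite measure.
-/

open MeasureTheory ProbabilityTheory Real Set Filter
open scoped ENNReal

theorem Continuous.integrable_of_measure_compl_eq_zero {X E : Type*} [TopologicalSpace X]
    [T2Space X] [MeasurableSpace X] [OpensMeasurableSpace X] [NormedAddCommGroup E]
    {μ : Measure X} [IsFiniteMeasureOnCompacts μ] {K : Set X} (hK : IsCompact K)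
    (hμK : μ Kᶜ = 0) {f : X → E} (hf : Continuous f) : Integrable f μ := by
  rw [← Measure.restrict_eq_self_of_ae_mem (mem_ae_iff.mpr hμK)]
  exact hf.continuousOn.integrableOn_compact hK

theorem ProbabilityTheory.integrableExpSet_id_eq_univ_of_measure_compl_eq_zero {μ : Measure ℝ}
    [IsFiniteMeasure μ] {K : Set ℝ} (hK : IsCompact K) (hμK : μ Kᶜ = 0) :
    integrableExpSet id μ = univ :=
  eq_univ_of_forall fun t ↦ (by fun_prop : Continuous fun x ↦ exp (t * x))
    |>.integrable_of_measure_compl_eq_zero hK hμK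

theorem ProbabilityTheory.ofReal_mgf_eq_lintegral {Ω : Type*} {m : MeasurableSpace Ω}
    {X : Ω → ℝ} {μ : Measure Ω} {t : ℝ} (ht : t ∈ integrableExpSet X μ) :
    ENNReal.ofReal (mgf X μ t) = ∫⁻ ω, ENNReal.ofReal (exp (t * X ω)) ∂μ :=
  ofReal_integral_eq_lintegral_ofReal ht (.of_forall fun _ ↦ exp_nonneg _)

theorem MeasureTheory.Measure.ext_of_mgf_eqOn {μ ν : Measure ℝ} [IsFiniteMeasure μ]
    [IsFiniteMeasure ν] (hμ : integrableExpSet id μ = univ) (hν : integrableExpSet id ν = univ)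
    {U : Set ℝ} (hU : IsOpen U) (hU_ne : U.Nonempty) (h : EqOn (mgf id μ) (mgf id ν) U) :
    μ = ν := by
  obtain ⟨t₀, ht₀⟩ := hU_ne
  have hmgf : mgf id μ = mgf id ν := by
    have hμa : AnalyticOnNhd ℝ (mgf id μ) univ := by
      simpa [hμ] using analyticOnNhd_mgf (X := id) (μ := μ)
    have hνa : AnalyticOnNhd ℝ (mgf id ν) univ := by
      simpa [hν] using analyticOnNhd_mgf (X := id) (μ := ν)
    exact funext fun t ↦ hμa.eqOn_of_preconnected_of_eventuallyEq hνa isPreconnected_univ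
      (mem_univ t₀) (eventually_of_mem (hU.mem_nhds ht₀) h) (mem_univ t)
  have hzero : μ = 0 ↔ ν = 0 := by
    have := congrFun hmgf 0
    simp only [mgf_zero'] at this
    rw [← Measure.measure_univ_eq_zero, ← Measure.measure_univ_eq_zero,
      ← measureReal_eq_zero_iff, ← measureReal_eq_zero_iff, this]
  refine Measure.ext_of_complexMGF_id_eq (funext fun z ↦ ?_)
  exact eqOn_complexMGF_of_mgf' hmgf hzero (by simp [hμ])

theorem lintegral_exp_neg_mul_mul_lintegral_sub (μ : Measure ℝ) [SFinite μ] {k : ℝ → ℝ≥0∞}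
    (hk : Measurable k) (s : ℝ) :
    ∫⁻ E, ENNReal.ofReal (exp (-s * E)) * ∫⁻ x, k (E - x) ∂μ =
      (∫⁻ x, ENNReal.ofReal (exp (-s * x)) ∂μ) * ∫⁻ t, ENNReal.ofReal (exp (-s * t)) * k t := by
  have hshift (x : ℝ) : ∫⁻ E, ENNReal.ofReal (exp (-s * E)) * k (E - x) =
      ENNReal.ofReal (exp (-s * x)) * ∫⁻ t, ENNReal.ofReal (exp (-s * t)) * k t := by
    rw [← lintegral_add_right_eq_self _ x, ← lintegral_const_mul' _ _ ENNReal.ofReal_ne_top]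
    refine lintegral_congr fun t ↦ ?_
    rw [add_sub_cancel_right, ← mul_assoc, ← ENNReal.ofReal_mul (exp_nonneg _), ← exp_add]
    ring_nf
  calc ∫⁻ E, ENNReal.ofReal (exp (-s * E)) * ∫⁻ x, k (E - x) ∂μ
      = ∫⁻ E, ∫⁻ x, ENNReal.ofReal (exp (-s * E)) * k (E - x) ∂μ := by
        refine lintegral_congr fun E ↦ (lintegral_const_mul' _ _ ENNReal.ofReal_ne_top).symm
    _ = ∫⁻ x, (∫⁻ E, ENNReal.ofReal (exp (-s * E)) * k (E - x)) ∂μ := by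
        refine lintegral_lintegral_swap (μ := (volume : Measure ℝ)) (ν := μ)
          (Measurable.aemeasurable ?_)
        exact (by fun_prop : Measurable fun p : ℝ × ℝ ↦ ENNReal.ofReal (exp (-s * p.1))).mul
          (hk.comp measurable_sub)
    _ = _ := by simp_rw [hshift]; exact lintegral_mul_const _ (by fun_prop)

theorem lintegral_exp_neg_mul_mul_sqrt {s : ℝ} (hs : 0 < s) :
    ∫⁻ t, ENNReal.ofReal (exp (-s * t)) * ENNReal.ofReal (√(max t 0)) =
      ENNReal.ofReal ((1 / s) ^ (3 / 2 : ℝ) * Gamma (3 / 2)) := by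
  have hval := integral_rpow_mul_exp_neg_mul_Ioi (a := 3 / 2) (by norm_num) hs
  have hpos : 0 < (1 / s) ^ (3 / 2 : ℝ) * Gamma (3 / 2) := by
    have := Gamma_pos_of_pos (by norm_num : (0 : ℝ) < 3 / 2); positivity
  rw [← hval, ofReal_integral_eq_lintegral_ofReal (.of_integral_ne_zero (hval ▸ hpos.ne'))
    (ae_restrict_of_forall_mem measurableSet_Ioi fun t ht ↦
      mul_nonneg (rpow_nonneg (le_of_lt ht) _) (exp_nonneg _)),
    ← lintegral_indicator measurableSet_Ioi]
  refine lintegral_congr fun t ↦ ?_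
  rcases le_or_gt t 0 with ht | ht
  · simp [ht]
  · rw [Set.indicator_of_mem (show t ∈ Ioi 0 from ht), ← ENNReal.ofReal_mul (exp_nonneg _),
      max_eq_left ht.le, sqrt_eq_rpow, mul_comm]
    norm_num [neg_mul]

noncomputable def sqrtAbelTransform (μ : Measure ℝ) (E : ℝ) : ℝ≥0∞ :=
  ∫⁻ x, ENNReal.ofReal (√(max (E - x) 0)) ∂μ

theorem lintegral_exp_neg_mul_eq_of_sqrtAbelTransform_eq {μ ν : Measure ℝ} [SFinite μ]
    [SFinite ν] (h : sqrtAbelTransform μ = sqrtAbelTransform ν) {s : ℝ} (hs : 0 < s) :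
    ∫⁻ x, ENNReal.ofReal (exp (-s * x)) ∂μ = ∫⁻ x, ENNReal.ofReal (exp (-s * x)) ∂ν := by
  have hk : Measurable fun t : ℝ ↦ ENNReal.ofReal (√(max t 0)) := by fun_prop
  have hC : 0 < (1 / s) ^ (3 / 2 : ℝ) * Gamma (3 / 2) := by
    have := Gamma_pos_of_pos (by norm_num : (0 : ℝ) < 3 / 2); positivity
  have hμ := lintegral_exp_neg_mul_mul_lintegral_sub μ hk s
  have hν := lintegral_exp_neg_mul_mul_lintegral_sub ν hk s
  rw [lintegral_exp_neg_mul_mul_sqrt hs] at hμ hν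
  refine (ENNReal.mul_left_inj (ENNReal.ofReal_pos.mpr hC).ne' ENNReal.ofReal_ne_top).mp ?_
  rw [← hμ, ← hν]
  exact congrArg (fun F ↦ ∫⁻ E, ENNReal.ofReal (exp (-s * E)) * F E) h

theorem stmt_5_general (c d : ℝ)
    (μ ν : Measure ℝ) [IsFiniteMeasure μ] [IsFiniteMeasure ν]
    (hμ : μ (Set.Icc c d)ᶜ = 0) (hν : ν (Set.Icc c d)ᶜ = 0)
    (h : ∀ E : ℝ,
      (∫ x, Real.sqrt (max (E - x) 0) ∂μ) = ∫ x, Real.sqrt (max (E - x) 0) ∂ν) :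
    μ = ν := by
  have hμ_exp := integrableExpSet_id_eq_univ_of_measure_compl_eq_zero isCompact_Icc hμ
  have hν_exp := integrableExpSet_id_eq_univ_of_measure_compl_eq_zero isCompact_Icc hν
  have habel : sqrtAbelTransform μ = sqrtAbelTransform ν := funext fun E ↦ by
    have hcont : Continuous fun x ↦ √(max (E - x) 0) := by fun_prop
    rw [sqrtAbelTransform, sqrtAbelTransform,
      ← ofReal_integral_eq_lintegral_ofReal (hcont.integrable_of_measure_compl_eq_zero
        isCompact_Icc hμ) (.of_forall fun _ ↦ sqrt_nonneg _),
      ← ofReal_integral_eq_lintegral_ofReal (hcont.integrable_of_measure_compl_eq_zero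
        isCompact_Icc hν) (.of_forall fun _ ↦ sqrt_nonneg _), h E]
  refine Measure.ext_of_mgf_eqOn hμ_exp hν_exp isOpen_Iio nonempty_Iio fun t (ht : t < 0) ↦ ?_
  have hlaplace := lintegral_exp_neg_mul_eq_of_sqrtAbelTransform_eq habel (neg_pos.mpr ht)
  simp only [neg_neg] at hlaplace
  rwa [← ENNReal.ofReal_eq_ofReal_iff mgf_nonneg mgf_nonneg,
    ofReal_mgf_eq_lintegral (hμ_exp ▸ mem_univ t), ofReal_mgf_eq_lintegral (hν_exp ▸ mem_univ t)]

/-- Injectivity of the half-power Abel transform on finite measures supported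
in `[c,d]`: if `∫ √((E - x)₊) dμ = ∫ √((E - x)₊) dν` for all `E ∈ ℝ`, then `μ = ν`. -/
theorem stmt_5 (c d : ℝ) (hcd : c < d)
    (μ ν : Measure ℝ) [IsFiniteMeasure μ] [IsFiniteMeasure ν]
    (hμ : μ (Set.Icc c d)ᶜ = 0) (hν : ν (Set.Icc c d)ᶜ = 0)
    (h : ∀ E : ℝ,
      (∫ x, Real.sqrt (max (E - x) 0) ∂μ) = ∫ x, Real.sqrt (max (E - x) 0) ∂ν) :
    μ = ν :=
  stmt_5_general c d μ ν hμ hν h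
end
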